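/- Let G be a finite simple graph and let v, w be two distinct vertices of G. There exists a burning sequence of G whose set of sources contains both v and w if and only if v and w are not adjacent in G. Equivalently, the 1-skeleton of the burning configuration space of G coincides with the complement graph of G. -/

import Mathlib

open SimpleGraph

/-- The path graph `P_n` with vertices `1, …, n` (represented by `Fin n`,
vertex `i+1` corresponds to index `i`) and edges `{i, i+1}`. -/
def pathG (n : ℕ) : SimpleGraph (Fin n) where
  Adj v w := v.val + 1 = w.val ∨ w.val + 1 = v.val
  symm := by constructor; intro v w h; tauto
  loopless := by constructor; intro v h; rcases h with h | h <;> omega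

/-- `(s 0, …, s (k-1))` is a burning sequence of `G` (written `1`-based in the paper:
`d(v_i, v_j) ≥ j - i + 1` for `i < j`, and every vertex `v` satisfies
`d(v_i, v) ≤ k + 1 - i` for some `i`). Distances are `ℕ∞`-valued. -/
def IsBurningSeq {V : Type*} (G : SimpleGraph V) {k : ℕ} (s : Fin k → V) : Prop :=
  1 ≤ k ∧
  (∀ i j : Fin k, i < j → ((j.val - i.val + 1 : ℕ) : ℕ∞) ≤ G.edist (s i) (s j)) ∧
  (∀ v : V, ∃ i : Fin k, G.edist (s i) v ≤ ((k - i.val : ℕ) : ℕ∞))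

/-- The burning time function `λ(v) = min_{1 ≤ i ≤ k} (i + d(v_i, v))`. -/
noncomputable def burnTime {V : Type*} (G : SimpleGraph V) {k : ℕ} (s : Fin k → V)
    (v : V) : ℕ :=
  (⨅ i : Fin k, ((i.val + 1 : ℕ) : ℕ∞) + G.edist (s i) v).toNat

/-- The end time `T = max_{v ∈ V} λ(v)` of a burning. -/
noncomputable def endTime {V : Type*} [Fintype V] (G : SimpleGraph V) {k : ℕ}
    (s : Fin k → V) : ℕ :=
  Finset.univ.sup fun v => burnTime G s v

/-!
Condition (a) alone forces any two sources to be at distance at least `2`, i.e. distinct and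
non-adjacent. Conversely, a sequence satisfying (a) can be completed to a burning sequence: while
some vertex `u` is unburnt at the last step, `d(v_i, u) > k + 1 - i` for every `i`, so appending
`u` as a new last source preserves (a). Since (a) makes the sources distinct, this stops after at
most `|V|` sources. Starting from `(v, w)` gives the converse direction.
-/

namespace SimpleGraph

variable {V : Type*} {G : SimpleGraph V} {u v : V}

theorem two_le_edist_iff : 2 ≤ G.edist u v ↔ u ≠ v ∧ ¬G.Adj u v := by
  rw [show (2 : ℕ∞) = ((1 : ℕ) : ℕ∞) + 1 by norm_num, ENat.natCast_add_one_le_iff, Nat.cast_one,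
    ← not_le, edist_le_one_iff_adj_or_eq]
  tauto

variable (G) in
def SourcesSeparated {k : ℕ} (s : Fin k → V) : Prop :=
  ∀ i j : Fin k, i < j → ((j.val - i.val + 1 : ℕ) : ℕ∞) ≤ G.edist (s i) (s j)

namespace SourcesSeparated

section

variable {k : ℕ} {s : Fin k → V}

theorem two_le_edist (hs : G.SourcesSeparated s) {i j : Fin k} (hij : i ≠ j) :
    2 ≤ G.edist (s i) (s j) := by
  rcases hij.lt_or_gt with hlt | hlt
  · exact le_trans (by norm_cast; omega) (hs i j hlt)
  · rw [edist_comm]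
    exact le_trans (by norm_cast; omega) (hs j i hlt)

theorem ne_and_not_adj (hs : G.SourcesSeparated s) {i j : Fin k} (hij : i ≠ j) :
    s i ≠ s j ∧ ¬G.Adj (s i) (s j) :=
  two_le_edist_iff.mp (hs.two_le_edist hij)

theorem injective (hs : G.SourcesSeparated s) : Function.Injective s := by
  intro i j hij
  by_contra hne
  exact (hs.ne_and_not_adj hne).1 hij

theorem snoc (hs : G.SourcesSeparated s)
    (hu : ∀ i : Fin k, ((k - i.val : ℕ) : ℕ∞) < G.edist (s i) u) :
    G.SourcesSeparated (Fin.snoc s u : Fin (k + 1) → V) := by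
  intro i j hij
  induction j using Fin.lastCases with
  | last =>
    obtain ⟨i, rfl⟩ := Fin.exists_castSucc_eq.mpr hij.ne
    simp only [Fin.snoc_castSucc, Fin.snoc_last, Fin.val_last, Fin.val_castSucc]
    rw [Nat.cast_add_one, ENat.natCast_add_one_le_iff]
    exact hu i
  | cast j =>
    obtain ⟨i, rfl⟩ := Fin.exists_castSucc_eq.mpr (hij.trans (Fin.castSucc_lt_last j)).ne
    simpa only [Fin.snoc_castSucc, Fin.val_castSucc] using hs i j hij

end

theorem exists_isBurningSeq [Finite V] {k : ℕ} {s : Fin k → V} (hk : 1 ≤ k)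
    (hs : G.SourcesSeparated s) :
    ∃ (k' : ℕ) (s' : Fin k' → V), IsBurningSeq G s' ∧ Set.range s ⊆ Set.range s' := by
  by_cases hcover : ∀ v : V, ∃ i : Fin k, G.edist (s i) v ≤ ((k - i.val : ℕ) : ℕ∞)
  · exact ⟨k, s, ⟨hk, hs, hcover⟩, subset_rfl⟩
  · push Not at hcover
    obtain ⟨u, hu⟩ := hcover
    have hsnoc := hs.snoc hu
    have hlen : k + 1 ≤ Nat.card V := by
      simpa using Nat.card_le_card_of_injective _ hsnoc.injective
    obtain ⟨k', s', hburn, hrange⟩ := hsnoc.exists_isBurningSeq (by omega)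
    refine ⟨k', s', hburn, subset_trans ?_ hrange⟩
    rw [Fin.range_snoc]
    exact Set.subset_insert u _
termination_by Nat.card V - k

end SourcesSeparated

theorem sourcesSeparated_pair (huv : u ≠ v) (hadj : ¬G.Adj u v) :
    G.SourcesSeparated ![u, v] := by
  intro i j hij
  fin_cases i <;> fin_cases j <;> simp at hij
  simpa using two_le_edist_iff.mpr ⟨huv, hadj⟩

end SimpleGraph

/-- For distinct vertices `v`, `w` of `G`, there is a burning
sequence of `G` whose set of sources contains both `v` and `w` if and only if `v`
and `w` are not adjacent in `G`; i.e. `{v, w}` is an edge of the `1`-skeleton of the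
burning configuration space `Δ_G` iff it is an edge of the complement graph of `G`. -/
theorem stmt_17 {V : Type*} [Fintype V] (G : SimpleGraph V) (v w : V) (hvw : v ≠ w) :
    (∃ (k : ℕ) (s : Fin k → V), IsBurningSeq G s ∧
        (∃ i : Fin k, s i = v) ∧ (∃ j : Fin k, s j = w)) ↔
      Gᶜ.Adj v w := by
  rw [compl_adj]
  constructor
  · rintro ⟨k, s, ⟨-, hsep, -⟩, ⟨i, rfl⟩, ⟨j, rfl⟩⟩
    exact SourcesSeparated.ne_and_not_adj hsep (by rintro rfl; exact hvw rfl)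
  · rintro ⟨hne, hadj⟩
    obtain ⟨k, s, hburn, hrange⟩ :=
      (sourcesSeparated_pair hne hadj).exists_isBurningSeq (by norm_num)
    exact ⟨k, s, hburn, hrange ⟨0, rfl⟩, hrange ⟨1, rfl⟩⟩
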